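/- Let k₊ > 0 and let a₀, a₁, a₂ ∈ ℝ with a₀ ≥ 0, a₁ > 0 and a₂ < 0. Define f(s) := a₀ + a₁·P(s) + a₂·Q(s) and w₀ := a₁√k₊/√(a₁² + a₂²). Then for every s ∈ ℂ with −√k₊ < Im s < w₀, the value f(s) is not a nonpositive real number, i.e. f(s) ∉ {t ∈ ℝ : t ≤ 0}. -/

import Mathlib

/-!
Write `P = Pf kp s` and `Q = Qf kp s`. Then `P² = 1 - Q²`, `Re P ≥ 0` and
`Re Q + Im Q = Im s / √kp`. Suppose `a₀ + a₁P + a₂Q` is real and `≤ 0`.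

If `Im Q ≠ 0`, the imaginary part of `P² = 1 - Q²` together with `a₁ Im P + a₂ Im Q = 0` gives
`a₁ Re Q = a₂ Re P`, hence `(a₁² + a₂²) Re P = a₁ (a₁ Re P + a₂ Re Q) ≤ -a₀a₁ ≤ 0`. So `P` and `Q`
are purely imaginary, and the real part of `P² = 1 - Q²` reads `-(Im P)² = 1 + (Im Q)²`.

If `Q` is real, so is `P = √(1 - Q²)`, and `0 ≤ a₁P ≤ -a₂Q` gives `a₁² ≤ (a₁² + a₂²) Q²`, i.e.
`Q ≥ a₁/√(a₁² + a₂²)`, which is `Im s ≥ w₀`.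
-/

open Complex Set

noncomputable section

/-- Principal square root on ℂ via the principal power. -/
def csqrt (z : ℂ) : ℂ := z ^ (1/2 : ℂ)

def Pf (kp : ℝ) (s : ℂ) : ℂ := csqrt (1 - s ^ 2 / (2 * (kp : ℂ) * Complex.I))

def Qf (kp : ℝ) (s : ℂ) : ℂ :=
  s * Complex.exp (-(Real.pi : ℂ) / 4 * Complex.I) / (Real.sqrt (2 * kp) : ℂ)

lemma csqrt_sq (z : ℂ) : csqrt z ^ 2 = z := by
  simp [csqrt, one_div, cpow_ofNat_inv_pow]

lemma re_csqrt_nonneg (z : ℂ) : 0 ≤ (csqrt z).re := by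
  rw [csqrt, one_div, cpow_inv_two_re]
  exact Real.sqrt_nonneg _

lemma Qf_eq (kp : ℝ) (s : ℂ) : Qf kp s = s * (1 - I) / (2 * Real.sqrt kp) := by
  have hexp : exp (-(Real.pi : ℂ) / 4 * I) = Real.sqrt 2 / 2 * (1 - I) := by
    rw [show -(Real.pi : ℂ) / 4 * I = ((-(Real.pi / 4) : ℝ) : ℂ) * I by push_cast; ring,
      exp_mul_I, ← ofReal_cos, ← ofReal_sin, Real.cos_neg, Real.sin_neg,
      Real.cos_pi_div_four, Real.sin_pi_div_four]
    push_cast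
    ring
  have h2 : (Real.sqrt 2 : ℂ) ≠ 0 := by norm_num
  rw [Qf, hexp, Real.sqrt_mul zero_le_two]
  push_cast
  field_simp

lemma Pf_sq {kp : ℝ} (hkp : 0 < kp) (s : ℂ) : Pf kp s ^ 2 = 1 - Qf kp s ^ 2 := by
  have hsqrt : ((Real.sqrt kp : ℝ) : ℂ) ^ 2 = kp := by
    norm_cast
    exact Real.sq_sqrt hkp.le
  have hkp' : (kp : ℂ) ≠ 0 := by exact_mod_cast hkp.ne'
  have hI : (1 - I) ^ 2 = -2 * I := by linear_combination I_sq
  rw [Pf, csqrt_sq, Qf_eq, div_pow, mul_pow, mul_pow, hsqrt, hI]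
  field_simp
  linear_combination (-s ^ 2) * I_sq

lemma re_add_im_Qf (kp : ℝ) (s : ℂ) : (Qf kp s).re + (Qf kp s).im = s.im / Real.sqrt kp := by
  rw [Qf_eq, show (2 * Real.sqrt kp : ℂ) = ((2 * Real.sqrt kp : ℝ) : ℂ) by push_cast; rfl,
    div_ofReal_re, div_ofReal_im]
  simp only [mul_re, mul_im, sub_re, sub_im, one_re, one_im, I_re, I_im]
  field_simp
  ring

section SlitPlane

variable {a0 a1 a2 : ℝ} {P Q : ℂ}

lemma add_mul_add_mul_mem_slitPlane_of_im_ne_zero (ha0 : 0 ≤ a0) (ha1 : 0 < a1)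
    (hPQ : P ^ 2 = 1 - Q ^ 2) (hP : 0 ≤ P.re) (hQ : Q.im ≠ 0) :
    (a0 + a1 * P + a2 * Q : ℂ) ∈ slitPlane := by
  rw [mem_slitPlane_iff]
  by_contra! h
  obtain ⟨hre, him⟩ := h
  simp only [add_re, add_im, mul_re, mul_im, ofReal_re, ofReal_im, zero_mul, sub_zero,
    add_zero, zero_add] at hre him
  have hPQ_re := congrArg re hPQ
  have hPQ_im := congrArg im hPQ
  simp only [sq, mul_re, mul_im, sub_re, sub_im, one_re, one_im] at hPQ_re hPQ_im
  have hQre : a1 * Q.re = a2 * P.re :=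
    mul_left_cancel₀ hQ (by linear_combination (a1 / 2) * hPQ_im - P.re * him)
  have hPre : P.re = 0 := by
    have hsum : (a1 ^ 2 + a2 ^ 2) * P.re ≤ 0 := by
      linear_combination a1 * hre - a2 * hQre + mul_nonneg ha1.le ha0
    have : 0 < a1 ^ 2 + a2 ^ 2 := by positivity
    nlinarith
  have hQre' : Q.re = 0 := by
    rw [hPre, mul_zero] at hQre
    exact (mul_eq_zero.mp hQre).resolve_left ha1.ne'
  rw [hPre, hQre'] at hPQ_re
  nlinarith

lemma add_mul_add_mul_mem_slitPlane_of_im_eq_zero (ha0 : 0 ≤ a0) (ha1 : 0 < a1) (ha2 : a2 < 0)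
    (hPQ : P ^ 2 = 1 - Q ^ 2) (hP : 0 ≤ P.re) (hQ : Q.im = 0)
    (hQre : Q.re * Real.sqrt (a1 ^ 2 + a2 ^ 2) < a1) :
    (a0 + a1 * P + a2 * Q : ℂ) ∈ slitPlane := by
  rw [mem_slitPlane_iff]
  by_contra! h
  obtain ⟨hre, him⟩ := h
  simp only [add_re, add_im, mul_re, mul_im, ofReal_re, ofReal_im, zero_mul, sub_zero,
    add_zero, zero_add] at hre him
  have hPim : P.im = 0 := by
    rw [hQ, mul_zero, add_zero] at him
    exact (mul_eq_zero.mp him).resolve_left ha1.ne'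
  have hPQ_re := congrArg re hPQ
  simp only [sq, mul_re, sub_re, one_re, hPim, hQ, mul_zero, sub_zero] at hPQ_re
  have hQre_nonneg : 0 ≤ Q.re := by nlinarith
  have hsq := Real.sq_sqrt (by positivity : 0 ≤ a1 ^ 2 + a2 ^ 2)
  have hsq_lt : (Q.re * Real.sqrt (a1 ^ 2 + a2 ^ 2)) ^ 2 < a1 ^ 2 :=
    pow_lt_pow_left₀ hQre (by positivity) two_ne_zero
  have hle : (a1 * P.re) ^ 2 ≤ (a2 * Q.re) ^ 2 := by
    rw [← neg_sq (a2 * Q.re)]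
    exact pow_le_pow_left₀ (by positivity) (by linarith) 2
  rw [mul_pow, hsq] at hsq_lt
  nlinarith

lemma add_mul_add_mul_mem_slitPlane (ha0 : 0 ≤ a0) (ha1 : 0 < a1) (ha2 : a2 < 0)
    (hPQ : P ^ 2 = 1 - Q ^ 2) (hP : 0 ≤ P.re)
    (hQ : (Q.re + Q.im) * Real.sqrt (a1 ^ 2 + a2 ^ 2) < a1) :
    (a0 + a1 * P + a2 * Q : ℂ) ∈ slitPlane := by
  rcases eq_or_ne Q.im 0 with hQim | hQim
  · rw [hQim, add_zero] at hQ
    exact add_mul_add_mul_mem_slitPlane_of_im_eq_zero ha0 ha1 ha2 hPQ hP hQim hQ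
  · exact add_mul_add_mul_mem_slitPlane_of_im_ne_zero ha0 ha1 hPQ hP hQim

end SlitPlane

theorem statement13 (kp a0 a1 a2 : ℝ) (hkp : 0 < kp)
    (ha0 : 0 ≤ a0) (ha1 : 0 < a1) (ha2 : a2 < 0) :
    ∀ s : ℂ,
      -Real.sqrt kp < s.im → s.im < a1 * Real.sqrt kp / Real.sqrt (a1 ^ 2 + a2 ^ 2) →
      (a0 : ℂ) + (a1 : ℂ) * Pf kp s + (a2 : ℂ) * Qf kp s ∉ {z : ℂ | z.im = 0 ∧ z.re ≤ 0} := by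
  intro s _ hs ⟨him, hre⟩
  have hbound : ((Qf kp s).re + (Qf kp s).im) * Real.sqrt (a1 ^ 2 + a2 ^ 2) < a1 := by
    rw [re_add_im_Qf, div_mul_eq_mul_div, div_lt_iff₀ (Real.sqrt_pos.2 hkp)]
    rwa [lt_div_iff₀ (Real.sqrt_pos.2 (by positivity))] at hs
  have hslit := add_mul_add_mul_mem_slitPlane ha0 ha1 ha2 (Pf_sq hkp s) (re_csqrt_nonneg _) hbound
  exact (mem_slitPlane_iff.1 hslit).elim hre.not_gt (· him)
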